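/- The series ∑_{m=0}^∞ a/((m+1)(m+a)) with a = 6/5 equals 6·(5 − log 10 − ((1+√5)/√(10−2√5))·π/2 + (1/2)·(√5·log((√5−1)/2) − log(√5/4))). -/

import Mathlib

open Real MeasureTheory

private lemma sqrt_eq_of {x y : ℝ} (h : 0 ≤ y) (h2 : y^2 = x) : Real.sqrt x = y := by
  rw [← h2, Real.sqrt_sq h]

private lemma s5_sq : Real.sqrt 5 ^ 2 = 5 := Real.sq_sqrt (by norm_num)
private lemma s5_gt : 2 < Real.sqrt 5 := by nlinarith [s5_sq, Real.sqrt_nonneg 5]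
private lemma s5_lt : Real.sqrt 5 < 3 := by nlinarith [s5_sq, Real.sqrt_nonneg 5]
private lemma ta_sq : Real.sqrt (10 - 2*Real.sqrt 5) ^ 2 = 10 - 2*Real.sqrt 5 :=
  Real.sq_sqrt (by nlinarith [s5_lt, s5_gt])
private lemma tb_sq : Real.sqrt (10 + 2*Real.sqrt 5) ^ 2 = 10 + 2*Real.sqrt 5 :=
  Real.sq_sqrt (by nlinarith [s5_lt, s5_gt])
private lemma ta_pos : 0 < Real.sqrt (10 - 2*Real.sqrt 5) :=
  Real.sqrt_pos.2 (by nlinarith [s5_lt])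
private lemma tb_pos : 0 < Real.sqrt (10 + 2*Real.sqrt 5) :=
  Real.sqrt_pos.2 (by nlinarith [s5_gt])
private lemma tab : Real.sqrt (10 - 2*Real.sqrt 5) * Real.sqrt (10 + 2*Real.sqrt 5) = 4 * Real.sqrt 5 := by
  rw [← Real.sqrt_mul (by nlinarith [s5_lt] : (0:ℝ) ≤ 10 - 2*Real.sqrt 5)]
  exact sqrt_eq_of (by positivity) (by nlinarith [s5_sq])

private lemma sin_pi_div_five' : Real.sin (π/5) = Real.sqrt (10 - 2*Real.sqrt 5) / 4 := by
  rw [Real.sin_eq_sqrt_one_sub_cos_sq (by positivity) (by nlinarith [pi_pos]),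
    Real.cos_pi_div_five]
  rw [show (1:ℝ) - ((1+Real.sqrt 5)/4)^2 = (10 - 2*Real.sqrt 5)/16 by nlinarith [s5_sq]]
  exact sqrt_eq_of (by positivity) (by rw [div_pow, ta_sq]; norm_num)

private lemma cos_two_pi_div_five' : Real.cos (2*π/5) = (Real.sqrt 5 - 1)/4 := by
  have h : (2:ℝ)*π/5 = 2*(π/5) := by ring
  rw [h, Real.cos_two_mul, Real.cos_pi_div_five]
  nlinarith [s5_sq]

private lemma sin_two_pi_div_five' :
    Real.sin (2*π/5) = Real.sqrt (10 - 2*Real.sqrt 5) * (1 + Real.sqrt 5) / 8 := by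
  have h : (2:ℝ)*π/5 = 2*(π/5) := by ring
  rw [h, Real.sin_two_mul, sin_pi_div_five', Real.cos_pi_div_five]
  ring

private lemma tan_pi_div_five' :
    Real.tan (π/5) = (5 - Real.sqrt 5) / Real.sqrt (10 + 2*Real.sqrt 5) := by
  rw [Real.tan_eq_sin_div_cos, sin_pi_div_five', Real.cos_pi_div_five]
  rw [div_eq_div_iff (by positivity) tb_pos.ne']
  nlinarith [tab, s5_sq, s5_gt, ta_pos, tb_pos]

private lemma tan_two_pi_div_five' :
    Real.tan (2*π/5) = (5 + Real.sqrt 5) / Real.sqrt (10 - 2*Real.sqrt 5) := by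
  rw [Real.tan_eq_sin_div_cos, sin_two_pi_div_five', cos_two_pi_div_five']
  rw [div_eq_div_iff (by nlinarith [s5_gt]) ta_pos.ne']
  nlinarith [ta_sq, s5_sq, s5_gt, ta_pos]

-- arctan values
private lemma arctan1 : Real.arctan ((5 + Real.sqrt 5) / Real.sqrt (10 - 2*Real.sqrt 5)) = 2*π/5 := by
  rw [← tan_two_pi_div_five', Real.arctan_tan] <;> nlinarith [pi_pos]

private lemma arctan2 : Real.arctan ((1 + Real.sqrt 5) / Real.sqrt (10 - 2*Real.sqrt 5)) = 3*π/10 := by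
  have h : (1 + Real.sqrt 5) / Real.sqrt (10 - 2*Real.sqrt 5) = Real.tan (3*π/10) := by
    rw [show (3:ℝ)*π/10 = π/2 - π/5 by ring, Real.tan_pi_div_two_sub, tan_pi_div_five',
      inv_div, div_eq_div_iff ta_pos.ne' (by nlinarith [s5_lt] : (5:ℝ) - Real.sqrt 5 ≠ 0)]
    nlinarith [tab, s5_sq, s5_gt, ta_pos, tb_pos]
  rw [h, Real.arctan_tan] <;> nlinarith [pi_pos]

private lemma arctan3 : Real.arctan ((5 - Real.sqrt 5) / Real.sqrt (10 + 2*Real.sqrt 5)) = π/5 := by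
  rw [← tan_pi_div_five', Real.arctan_tan] <;> nlinarith [pi_pos]

private lemma arctan4 : Real.arctan ((1 - Real.sqrt 5) / Real.sqrt (10 + 2*Real.sqrt 5)) = -(π/10) := by
  have h : (1 - Real.sqrt 5) / Real.sqrt (10 + 2*Real.sqrt 5) = Real.tan (-(π/10)) := by
    rw [Real.tan_neg, show (π:ℝ)/10 = π/2 - 2*π/5 by ring, Real.tan_pi_div_two_sub,
      tan_two_pi_div_five', inv_div, ← neg_div,
      div_eq_div_iff tb_pos.ne' (by nlinarith [s5_gt] : (5:ℝ) + Real.sqrt 5 ≠ 0)]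
    nlinarith [tab, s5_sq, s5_gt, ta_pos, tb_pos]
  rw [h, Real.arctan_tan] <;> nlinarith [pi_pos]








private lemma P_pos (x : ℝ) : 0 < x^2 + (1+Real.sqrt 5)/2*x + 1 := by
  nlinarith [s5_sq, s5_gt, s5_lt, sq_nonneg (x + (1+Real.sqrt 5)/4)]
private lemma Q_pos (x : ℝ) : 0 < x^2 + (1-Real.sqrt 5)/2*x + 1 := by
  nlinarith [s5_sq, s5_gt, s5_lt, sq_nonneg (x + (1-Real.sqrt 5)/4)]
private lemma Phi_pos (x : ℝ) : 0 < x^4 + x^3 + x^2 + x + 1 := by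
  nlinarith [P_pos x, Q_pos x, s5_sq]

noncomputable def F5 (x : ℝ) : ℝ :=
  x - ((1+Real.sqrt 5)/(4*Real.sqrt 5)) * Real.log (x^2 + (1+Real.sqrt 5)/2*x + 1)
    + ((1-Real.sqrt 5)/(4*Real.sqrt 5)) * Real.log (x^2 + (1-Real.sqrt 5)/2*x + 1)
    + ((1-Real.sqrt 5)/(Real.sqrt 5*Real.sqrt (10 - 2*Real.sqrt 5))) *
        Real.arctan ((4*x+1+Real.sqrt 5)/Real.sqrt (10 - 2*Real.sqrt 5))
    - ((1+Real.sqrt 5)/(Real.sqrt 5*Real.sqrt (10 + 2*Real.sqrt 5))) *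
        Real.arctan ((4*x+1-Real.sqrt 5)/Real.sqrt (10 + 2*Real.sqrt 5))

set_option maxHeartbeats 2000000 in
private lemma F5_deriv (x : ℝ) :
    HasDerivAt F5 (x^4 / (x^4 + x^3 + x^2 + x + 1)) x := by
  set s5 := Real.sqrt 5
  set ta := Real.sqrt (10 - 2*s5)
  set tb := Real.sqrt (10 + 2*s5)
  have hP : HasDerivAt (fun x : ℝ => x^2 + (1+s5)/2*x + 1) (2*x + (1+s5)/2) x := by
    simpa using (((hasDerivAt_pow 2 x).add (((hasDerivAt_id x).const_mul ((1+s5)/2)))).add_const 1)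
  have hQ : HasDerivAt (fun x : ℝ => x^2 + (1-s5)/2*x + 1) (2*x + (1-s5)/2) x := by
    simpa using (((hasDerivAt_pow 2 x).add (((hasDerivAt_id x).const_mul ((1-s5)/2)))).add_const 1)
  have hlogP := (hP.log (P_pos x).ne')
  have hlogQ := (hQ.log (Q_pos x).ne')
  have hiA : HasDerivAt (fun x : ℝ => (4*x+1+s5)/ta) (4/ta) x := by
    simpa [div_eq_mul_inv, add_assoc] using
      ((((hasDerivAt_id x).const_mul 4).add_const (1+s5)).mul_const ta⁻¹)
  have hiB : HasDerivAt (fun x : ℝ => (4*x+1-s5)/tb) (4/tb) x := by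
    have h : (fun x : ℝ => (4*x+1-s5)/tb) = fun x : ℝ => (4*x+(1-s5))*tb⁻¹ := by
      funext y; rw [div_eq_mul_inv]; ring
    rw [h, show (4:ℝ)/tb = 4*tb⁻¹ from div_eq_mul_inv 4 tb]
    simpa using ((((hasDerivAt_id x).const_mul 4).add_const (1-s5)).mul_const tb⁻¹)
  have hatA := (Real.hasDerivAt_arctan ((4*x+1+s5)/ta)).comp x hiA
  have hatB := (Real.hasDerivAt_arctan ((4*x+1-s5)/tb)).comp x hiB
  have H := ((((hasDerivAt_id x).sub (hlogP.const_mul ((1+s5)/(4*s5)))).add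
      (hlogQ.const_mul ((1-s5)/(4*s5)))).add
      (hatA.const_mul ((1-s5)/(s5*ta)))).sub
      (hatB.const_mul ((1+s5)/(s5*tb)))
  convert H using 1
  · rfl
  · rfl
  · rfl
  have hs5 : (0:ℝ) < s5 := by nlinarith [s5_gt]
  have h1 : ta^2 = 10 - 2*s5 := ta_sq
  have h2 : tb^2 = 10 + 2*s5 := tb_sq
  have h3 : s5^2 = 5 := s5_sq
  have key : ∀ t u : ℝ, 0 < t → 1/(1+(u/t)^2)*(4/t) = 4*t/(t^2+u^2) := by
    intro t u ht
    have h : t^2 + u^2 > 0 := by positivity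
    field_simp
  rw [key _ _ ta_pos, key _ _ tb_pos]
  have cancel : ∀ c t C : ℝ, t ≠ 0 → C ≠ 0 → c/(s5*t) * (4*t/C) = 4*c/(s5*C) := by
    intro c t C ht hC
    field_simp
  have hCA : ta^2+(4*x+1+s5)^2 ≠ 0 :=
    (by nlinarith [sq_nonneg (4*x+1+s5), pow_pos ta_pos 2] : (0:ℝ) < ta^2+(4*x+1+s5)^2).ne'
  have hCB : tb^2+(4*x+1-s5)^2 ≠ 0 :=
    (by nlinarith [sq_nonneg (4*x+1-s5), pow_pos tb_pos 2] : (0:ℝ) < tb^2+(4*x+1-s5)^2).ne'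
  rw [cancel _ _ _ ta_pos.ne' hCA, cancel _ _ _ tb_pos.ne' hCB, h1, h2]
  have e3 : s5^3 = 5*s5 := by nlinarith [h3]
  have e4 : s5^4 = 25 := by nlinarith [h3]
  have e5 : s5^5 = 25*s5 := by nlinarith [h3, e3]
  have e6 : s5^6 = 125 := by nlinarith [h3, e4]
  have e7 : s5^7 = 125*s5 := by nlinarith [h3, e5, e3]
  have e8 : s5^8 = 625 := by nlinarith [h3, e6, e4]
  have hCA16 : (10 - 2*s5)+(4*x+1+s5)^2 = 16*(x^2+(1+s5)/2*x+1) := by linear_combination h3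
  have hCB16 : (10 + 2*s5)+(4*x+1-s5)^2 = 16*(x^2+(1-s5)/2*x+1) := by linear_combination h3
  rw [hCA16, hCB16]
  have hs5' : s5 ≠ 0 := hs5.ne'
  have hP2 : (x^2*2+(1+s5)*x+2) ≠ 0 := by nlinarith [P_pos x]
  have hQ2 : (x^2*2+(1-s5)*x+2) ≠ 0 := by nlinarith [Q_pos x]
  have hP3 : x*(x*2+(1+s5))+2 ≠ 0 := by nlinarith [P_pos x]
  have hQ3 : x*(x*2+(1-s5))+2 ≠ 0 := by nlinarith [Q_pos x]
  have hF3 : x*(x*(x*(x+1)+1)+1)+1 ≠ 0 := by nlinarith [Phi_pos x]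
  field_simp [hP2, hQ2, (Phi_pos x).ne', hP3, hQ3, hF3]
  ring_nf
  simp only [h3, e3, e4, e5, e6, e7, e8]
  ring_nf
private lemma g_cont : Continuous (fun x : ℝ => x^4 / (x^4 + x^3 + x^2 + x + 1)) :=
  (continuous_pow 4).div (by continuity) (fun x => (Phi_pos x).ne')

private lemma integral_g :
    ∫ x in (0:ℝ)..1, x^4 / (x^4 + x^3 + x^2 + x + 1) = F5 1 - F5 0 :=
  intervalIntegral.integral_eq_sub_of_hasDerivAt (fun x _ => F5_deriv x)
    (g_cont.intervalIntegrable 0 1)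

-- per-term integral
private lemma term_integral (m : ℕ) :
    ∫ x in Set.Ioo (0:ℝ) 1, (x^(5*m+4) - x^(5*m+5)) =
      1/(5*(m:ℝ)+5) - 1/(5*(m:ℝ)+6) := by
  rw [← MeasureTheory.integral_Ioc_eq_integral_Ioo,
    ← intervalIntegral.integral_of_le (by norm_num : (0:ℝ) ≤ 1)]
  rw [intervalIntegral.integral_sub ((intervalIntegral.intervalIntegrable_pow _)) ((intervalIntegral.intervalIntegrable_pow _))]
  rw [integral_pow, integral_pow]
  push_cast
  norm_num
  ring
private lemma term_eq (m : ℕ) :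
    (6/5 : ℝ)/(((m:ℝ)+1)*((m:ℝ)+6/5)) = 30*(1/(5*(m:ℝ)+5) - 1/(5*(m:ℝ)+6)) := by
  have h1 : ((m:ℝ)+1) ≠ 0 := by positivity
  have h2 : ((m:ℝ)+6/5) ≠ 0 := by positivity
  have h3 : (5*(m:ℝ)+5) ≠ 0 := by positivity
  have h4 : (5*(m:ℝ)+6) ≠ 0 := by positivity
  field_simp
  ring

private lemma V_summable : Summable (fun m : ℕ => 1/(5*(m:ℝ)+5) - 1/(5*(m:ℝ)+6)) := by
  have hbase : Summable (fun n : ℕ => 1/((n:ℝ))^2) := by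
    simpa using Real.summable_one_div_nat_pow.2 one_lt_two
  have hshift : Summable (fun n : ℕ => 1/(((n:ℝ))+1)^2) := by
    have := (summable_nat_add_iff 1).2 hbase
    simpa [add_comm] using this
  apply Summable.of_nonneg_of_le _ _ hshift
  · intro m
    have h3 : (0:ℝ) < 5*(m:ℝ)+5 := by positivity
    have h4 : (0:ℝ) < 5*(m:ℝ)+6 := by positivity
    rw [sub_nonneg, div_le_div_iff₀ h4 h3]
    nlinarith
  · intro m
    have h3 : (0:ℝ) < 5*(m:ℝ)+5 := by positivity
    have h4 : (0:ℝ) < 5*(m:ℝ)+6 := by positivity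
    have h5 : (0:ℝ) < ((m:ℝ)+1)^2 := by positivity
    rw [div_sub_div _ _ h3.ne' h4.ne', div_le_div_iff₀ (by positivity) h5]
    nlinarith [sq_nonneg ((m:ℝ)+1)]

private lemma f_intOn (m : ℕ) :
    IntegrableOn (fun x : ℝ => x^(5*m+4) - x^(5*m+5)) (Set.Ioo 0 1) volume := by
  exact (((continuous_pow _).sub (continuous_pow _)).integrableOn_Icc).mono_set
    Set.Ioo_subset_Icc_self

private lemma norm_integral_eq (m : ℕ) :
    ∫ x in Set.Ioo (0:ℝ) 1, ‖x^(5*m+4) - x^(5*m+5)‖ =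
      1/(5*(m:ℝ)+5) - 1/(5*(m:ℝ)+6) := by
  rw [← term_integral m]
  apply setIntegral_congr_fun measurableSet_Ioo
  intro x hx
  have h1 : (0:ℝ) ≤ x := hx.1.le
  have h2 : x ≤ 1 := hx.2.le
  have : x^(5*m+5) ≤ x^(5*m+4) := pow_le_pow_of_le_one h1 h2 (by omega)
  simp [Real.norm_eq_abs, abs_of_nonneg (sub_nonneg.2 this)]

private lemma swap_lemma :
    ∑' m : ℕ, ∫ x in Set.Ioo (0:ℝ) 1, (x^(5*m+4) - x^(5*m+5)) =
      ∫ x in Set.Ioo (0:ℝ) 1, ∑' m : ℕ, (x^(5*m+4) - x^(5*m+5)) := by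
  apply MeasureTheory.integral_tsum_of_summable_integral_norm f_intOn
  simp only [norm_integral_eq]
  exact V_summable

private lemma tsum_pt {x : ℝ} (hx : x ∈ Set.Ioo (0:ℝ) 1) :
    ∑' m : ℕ, (x^(5*m+4) - x^(5*m+5)) = x^4/(x^4+x^3+x^2+x+1) := by
  have h5 : x^5 < 1 := pow_lt_one₀ hx.1.le hx.2 (by norm_num)
  have h5' : (0:ℝ) ≤ x^5 := pow_nonneg hx.1.le 5
  have hterm : ∀ m : ℕ, x^(5*m+4) - x^(5*m+5) = (x^4 - x^5) * (x^5)^m := by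
    intro m
    rw [← pow_mul, pow_add, pow_add, mul_comm 5 m, pow_mul]
    ring
  rw [tsum_congr hterm, tsum_mul_left, tsum_geometric_of_lt_one h5' h5]
  have hne : (1:ℝ) - x^5 ≠ 0 := by nlinarith
  have hPhi : (x^4+x^3+x^2+x+1) ≠ 0 := (Phi_pos x).ne'
  field_simp
  rw [eq_div_iff (by convert hPhi using 1; ring)]
  ring
private lemma hlog1 : Real.log ((5+Real.sqrt 5)/2) = Real.log (Real.sqrt 5) - Real.log ((Real.sqrt 5 - 1)/2) := by
  have hne : ((Real.sqrt 5 - 1)/2) ≠ 0 := by nlinarith [s5_gt]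
  rw [show (5+Real.sqrt 5)/2 = Real.sqrt 5/((Real.sqrt 5 - 1)/2) by
    rw [eq_div_iff hne]; linear_combination (1/4 : ℝ) * s5_sq]
  exact Real.log_div (by positivity) hne

private lemma hlog2 : Real.log ((5-Real.sqrt 5)/2) = Real.log (Real.sqrt 5) + Real.log ((Real.sqrt 5 - 1)/2) := by
  have hne : ((Real.sqrt 5 - 1)/2) ≠ 0 := by nlinarith [s5_gt]
  rw [show (5-Real.sqrt 5)/2 = Real.sqrt 5*((Real.sqrt 5 - 1)/2) by
    linear_combination (-1/2 : ℝ) * s5_sq]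
  exact Real.log_mul (by positivity) hne

private lemma hlog3 : Real.log 10 = Real.log 2 + 2 * Real.log (Real.sqrt 5) := by
  rw [show (10:ℝ) = 2*(Real.sqrt 5*Real.sqrt 5) by nlinarith [s5_sq],
    Real.log_mul (by norm_num) (by positivity),
    Real.log_mul (by positivity) (by positivity)]
  ring

private lemma hlog4 : Real.log (Real.sqrt 5/4) = Real.log (Real.sqrt 5) - 2 * Real.log 2 := by
  rw [Real.log_div (by positivity) (by norm_num),
    show (4:ℝ) = 2^2 by norm_num, Real.log_pow]
  push_cast
  ring

set_option maxHeartbeats 4000000 in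
private lemma final_eq : 30 * (F5 1 - F5 0) =
    6 * (5 - Real.log 10 - ((1 + Real.sqrt 5) / Real.sqrt (10 - 2 * Real.sqrt 5)) * Real.pi / 2 +
      (1/2) * (Real.sqrt 5 * Real.log ((Real.sqrt 5 - 1) / 2) - Real.log (Real.sqrt 5 / 4))) := by
  have h3 := s5_sq
  have h1 := ta_sq
  have hta := ta_pos
  have htb := tb_pos
  have hs5 : (0:ℝ) < Real.sqrt 5 := by nlinarith [s5_gt]
  unfold F5
  rw [show (1:ℝ)^2+(1+Real.sqrt 5)/2*1+1 = (5+Real.sqrt 5)/2 by ring,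
      show (1:ℝ)^2+(1-Real.sqrt 5)/2*1+1 = (5-Real.sqrt 5)/2 by ring,
      show (0:ℝ)^2+(1+Real.sqrt 5)/2*0+1 = 1 by ring,
      show (0:ℝ)^2+(1-Real.sqrt 5)/2*0+1 = 1 by ring,
      show (4*(1:ℝ)+1+Real.sqrt 5) = 5+Real.sqrt 5 by ring,
      show (4*(1:ℝ)+1-Real.sqrt 5) = 5-Real.sqrt 5 by ring,
      show (4*(0:ℝ)+1+Real.sqrt 5) = 1+Real.sqrt 5 by ring,
      show (4*(0:ℝ)+1-Real.sqrt 5) = 1-Real.sqrt 5 by ring,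
      arctan1, arctan2, arctan3, arctan4, Real.log_one,
      hlog1, hlog2, hlog3, hlog4]
  have htbv : Real.sqrt (10 + 2*Real.sqrt 5) = 4*Real.sqrt 5/Real.sqrt (10 - 2*Real.sqrt 5) := by
    rw [eq_div_iff hta.ne']
    linear_combination tab
  rw [htbv]
  set s := Real.sqrt 5
  set t := Real.sqrt (10 - 2*s)
  have e3 : s^3 = 5*s := by nlinarith [h3]
  have e4 : s^4 = 25 := by nlinarith [h3]
  have e5 : s^5 = 25*s := by nlinarith [h3, e3]
  have e6 : s^6 = 125 := by nlinarith [h3, e4]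
  have e7 : s^7 = 125*s := by nlinarith [h3, e5, e3]
  have e8 : s^8 = 625 := by nlinarith [h3, e6, e4]
  have e9 : s^9 = 625*s := by nlinarith [h3, e7, e3]
  have e10 : s^10 = 3125 := by nlinarith [h3, e8, e4]
  have e11 : s^11 = 3125*s := by nlinarith [h3, e9, e3]
  have e12 : s^12 = 15625 := by nlinarith [h3, e10, e4]
  have a3 : t^3 = (10-2*s)*t := by nlinarith [h1]
  have a4 : t^4 = 120-40*s := by nlinarith [h1, h3]
  have a5 : t^5 = (120-40*s)*t := by nlinarith [h1, a3, a4]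
  have a6 : t^6 = 1600 - 640*s := by nlinarith [h1, a4, h3]
  have hd : (4*s/t) ≠ 0 := by positivity
  field_simp
  ring_nf
  simp only [h3, e3, e4, e5, e6, e7, e8, e9, e10, e11, e12, h1, a3, a4, a5, a6]
  linear_combination (1800 : ℝ) * π * h3
theorem stmt_8 :
    (∑' m : ℕ, (6/5 : ℝ) / ((m + 1) * (m + (6/5 : ℝ)))) = 6 * (5 - Real.log 10 - ((1 + Real.sqrt 5) / Real.sqrt (10 - 2 * Real.sqrt 5)) * Real.pi / 2 + (1/2) * (Real.sqrt 5 * Real.log ((Real.sqrt 5 - 1) / 2) - Real.log (Real.sqrt 5 / 4))) := by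
  have step1 : ∀ m : ℕ, (6/5 : ℝ)/(((m:ℝ) + 1)*((m:ℝ) + 6/5)) =
      30 * ∫ x in Set.Ioo (0:ℝ) 1, (x^(5*m+4) - x^(5*m+5)) := by
    intro m
    rw [term_integral m]
    exact term_eq m
  calc (∑' m : ℕ, (6/5 : ℝ) / ((m + 1) * (m + (6/5 : ℝ))))
      = ∑' m : ℕ, 30 * ∫ x in Set.Ioo (0:ℝ) 1, (x^(5*m+4) - x^(5*m+5)) := tsum_congr step1
    _ = 30 * ∑' m : ℕ, ∫ x in Set.Ioo (0:ℝ) 1, (x^(5*m+4) - x^(5*m+5)) := tsum_mul_left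
    _ = 30 * ∫ x in Set.Ioo (0:ℝ) 1, ∑' m : ℕ, (x^(5*m+4) - x^(5*m+5)) := by
        rw [swap_lemma]
    _ = 30 * ∫ x in Set.Ioo (0:ℝ) 1, x^4/(x^4+x^3+x^2+x+1) := by
        congr 1
        exact setIntegral_congr_fun measurableSet_Ioo (fun x hx => tsum_pt hx)
    _ = 30 * ∫ x in (0:ℝ)..1, x^4/(x^4+x^3+x^2+x+1) := by
        rw [intervalIntegral.integral_of_le (by norm_num : (0:ℝ) ≤ 1),
          MeasureTheory.integral_Ioc_eq_integral_Ioo]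
    _ = 30 * (F5 1 - F5 0) := by rw [integral_g]
    _ = _ := final_eq
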